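/- For each integer k ≥ 4, let G_k be the graph obtained from the complete bipartite graph K_{9, k−4} with parts S (of size 9) and T (of size k − 4) by placing on S a copy of the graph Ĥ (the graph on pairs (i, j), i ∈ {1,2,3}, j ∈ {1,2,3,4}, excluding (1,1), (2,2), (3,3), with (i₁, j₁) adjacent to (i₂, j₂) iff i₁ ≠ i₂ and j₁ ≠ j₂) and making T a clique (adding all C(k−4, 2) edges inside T). Then G_k is (k−1)-colorable and Kc(G_k, k) ≥ 2. -/

import Mathlib

open SimpleGraph

/-- The spanning subgraph of `G` consisting of the edges both of whose endpoints
receive color `i` or color `j` under `φ`. -/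
def kempeSubgraph {V : Type*} (G : SimpleGraph V) {k : ℕ} (φ : V → Fin k) (i j : Fin k) :
    SimpleGraph V where
  Adj u v := G.Adj u v ∧ (φ u = i ∨ φ u = j) ∧ (φ v = i ∨ φ v = j)
  symm := ⟨fun u v ⟨h, hu, hv⟩ => ⟨h.symm, hv, hu⟩⟩
  loopless := ⟨fun v h => G.loopless.irrefl v h.1⟩

/-- `ψ` is obtained from `φ` by a single `i,j`-Kempe swap:  the colors `i` and `j` are
interchanged on the connected component (of the subgraph induced by colors `i,j`)
containing `w`, and nothing else changes. -/
def IsKempeSwap {V : Type*} (G : SimpleGraph V) {k : ℕ}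
    (φ ψ : G.Coloring (Fin k)) : Prop :=
  ∃ (i j : Fin k) (w : V), ∀ v : V,
    ((kempeSubgraph G (fun x => φ x) i j).Reachable w v → ψ v = Equiv.swap i j (φ v)) ∧
    (¬ (kempeSubgraph G (fun x => φ x) i j).Reachable w v → ψ v = φ v)

/-- Kempe `k`-equivalence of proper `k`-colorings:  one can be transformed into the
other by a sequence of Kempe swaps. -/
def KempeEquiv {V : Type*} (G : SimpleGraph V) (k : ℕ)
    (φ ψ : G.Coloring (Fin k)) : Prop :=
  Relation.EqvGen (IsKempeSwap G) φ ψ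

/-- `Kc G k` is the number of Kempe equivalence classes of proper `k`-colorings of `G`. -/
noncomputable def Kc {V : Type*} (G : SimpleGraph V) (k : ℕ) : ℕ :=
  Nat.card (Quot (KempeEquiv G k))

/-- `G` can be obtained from a bipartite graph by adding `ℓ` edges. -/
def BipartitePlus {V : Type*} (G : SimpleGraph V) (ℓ : ℕ) : Prop :=
  ∃ E : Finset (Sym2 V), E.card = ℓ ∧ ↑E ⊆ G.edgeSet ∧
    (G.deleteEdges ↑E).Colorable 2

/-- `K₃ × K₄`: the categorical (tensor) product of complete graphs, on
`Fin 3 × Fin 4`, where `(i₁,j₁)` is adjacent to `(i₂,j₂)` iff `i₁ ≠ i₂` and `j₁ ≠ j₂`. -/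
def Htensor : SimpleGraph (Fin 3 × Fin 4) where
  Adj p q := p.1 ≠ q.1 ∧ p.2 ≠ q.2
  symm := ⟨fun p q h => ⟨h.1.symm, h.2.symm⟩⟩
  loopless := ⟨fun p h => h.1 rfl⟩

/-- The vertices of `Ĥ`: pairs `(i,j)` with `i ∈ Fin 3`, `j ∈ Fin 4`, excluding the
three "diagonal" pairs (which correspond to `(1,1), (2,2), (3,3)` in the 1-indexed
description). -/
abbrev HhatVert : Type := {p : Fin 3 × Fin 4 // (p.1 : ℕ) ≠ (p.2 : ℕ)}

/-- The graph `Ĥ`, i.e. `K₃ × K₄` with the three diagonal vertices deleted. -/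
def Hhat : SimpleGraph HhatVert where
  Adj p q := p.1.1 ≠ q.1.1 ∧ p.1.2 ≠ q.1.2
  symm := ⟨fun p q h => ⟨h.1.symm, h.2.symm⟩⟩
  loopless := ⟨fun p h => h.1 rfl⟩

/-- The graph `G_k` obtained from the complete bipartite graph `K_{9,k-4}`, with
parts `S` (a copy of the 9 vertices of `Ĥ`) and `T` of size `k - 4`, by adding the
edges of `Ĥ` inside `S` and all edges inside `T`. -/
def Gk (k : ℕ) : SimpleGraph (HhatVert ⊕ Fin (k - 4)) where
  Adj u v :=
    match u, v with
    | Sum.inl a, Sum.inl b => Hhat.Adj a b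
    | Sum.inl _, Sum.inr _ => True
    | Sum.inr _, Sum.inl _ => True
    | Sum.inr a, Sum.inr b => a ≠ b
  symm := by
    refine ⟨?_⟩
    rintro (a | a) (b | b) h
    · exact Hhat.symm.symm _ _ h
    · trivial
    · trivial
    · exact Ne.symm h
  loopless := by
    refine ⟨?_⟩
    rintro (a | a) h
    · exact Hhat.loopless.irrefl a h
    · exact h rfl

/-!
Color `Ĥ` by columns (4 colors) and the clique `T` by `k - 4` further colors. This
`k`-coloring is frozen: any two of its color classes induce a connected subgraph, through a
vertex of `T` when one of the colors lives on `T`, and by a finite check inside `Ĥ` otherwise.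
A Kempe swap of a frozen coloring merely permutes the colors, so the Kempe class of the column
coloring consists of its color permutations. Coloring `Ĥ` by rows instead uses only `k - 1`
colors, and is not a color permutation of the column coloring.
-/

section Kempe

variable {V W : Type*} {G : SimpleGraph V} {H : SimpleGraph W} {k : ℕ}

/-- Every Kempe swap of a frozen coloring interchanges two whole color classes. -/
def IsKempeFrozen (G : SimpleGraph V) (φ : V → Fin k) : Prop :=
  ∀ ⦃i j : Fin k⦄, i ≠ j → ∀ ⦃u v : V⦄, (φ u = i ∨ φ u = j) → (φ v = i ∨ φ v = j) →
    (kempeSubgraph G φ i j).Reachable u v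

@[simp]
lemma kempeSubgraph_adj {φ : V → Fin k} {i j : Fin k} {u v : V} :
    (kempeSubgraph G φ i j).Adj u v ↔
      G.Adj u v ∧ (φ u = i ∨ φ u = j) ∧ (φ v = i ∨ φ v = j) :=
  Iff.rfl

instance [DecidableRel G.Adj] (φ : V → Fin k) (i j : Fin k) :
    DecidableRel (kempeSubgraph G φ i j).Adj :=
  fun _ _ => decidable_of_iff' _ kempeSubgraph_adj

lemma kempeSubgraph_comm (φ : V → Fin k) (i j : Fin k) :
    kempeSubgraph G φ i j = kempeSubgraph G φ j i := by
  ext u v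
  simp only [kempeSubgraph_adj, or_comm]

lemma kempeSubgraph_perm_comp (φ : V → Fin k) (σ : Equiv.Perm (Fin k)) (i j : Fin k) :
    kempeSubgraph G (σ ∘ φ) i j = kempeSubgraph G φ (σ.symm i) (σ.symm j) := by
  ext u v
  simp only [kempeSubgraph_adj, Function.comp_apply, ← Equiv.eq_symm_apply]

lemma SimpleGraph.Reachable.kempeSubgraph_map {l : ℕ} (e : G →g H) {φ : V → Fin k}
    {ψ : W → Fin l} {a b : Fin k} {i j : Fin l}
    (hcol : ∀ v, (φ v = a ∨ φ v = b) → (ψ (e v) = i ∨ ψ (e v) = j))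
    {u v : V} (h : (kempeSubgraph G φ a b).Reachable u v) :
    (kempeSubgraph H ψ i j).Reachable (e u) (e v) :=
  h.map (G := kempeSubgraph G φ a b) (G' := kempeSubgraph H ψ i j)
    ⟨e, fun hadj => ⟨e.map_rel hadj.1, hcol _ hadj.2.1, hcol _ hadj.2.2⟩⟩

lemma IsKempeFrozen.perm_comp {φ : V → Fin k} (hφ : IsKempeFrozen G φ)
    (σ : Equiv.Perm (Fin k)) : IsKempeFrozen G (σ ∘ φ) := by
  intro i j hij u v hu hv
  rw [kempeSubgraph_perm_comp]
  simp only [Function.comp_apply, ← Equiv.eq_symm_apply] at hu hv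
  exact hφ (σ.symm.injective.ne hij) hu hv

lemma IsKempeSwap.symm {φ ψ : G.Coloring (Fin k)} (h : IsKempeSwap G φ ψ) :
    IsKempeSwap G ψ φ := by
  obtain ⟨i, j, w, h⟩ := h
  -- the swap fixes the set of vertices colored `i` or `j`, hence the Kempe subgraph
  have hsame : kempeSubgraph G (fun x => ψ x) i j = kempeSubgraph G (fun x => φ x) i j := by
    have hmem : ∀ v, (ψ v = i ∨ ψ v = j) ↔ (φ v = i ∨ φ v = j) := fun v => by
      by_cases hr : (kempeSubgraph G (fun x => φ x) i j).Reachable w v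
      · rw [(h v).1 hr, Equiv.swap_apply_eq_iff, Equiv.swap_apply_eq_iff, Equiv.swap_apply_left,
          Equiv.swap_apply_right, or_comm]
      · rw [(h v).2 hr]
    ext u v
    simp only [kempeSubgraph_adj, hmem]
  refine ⟨i, j, w, fun v => ⟨fun hr => ?_, fun hr => ?_⟩⟩ <;> rw [hsame] at hr
  · rw [(h v).1 hr, Equiv.swap_apply_self]
  · exact ((h v).2 hr).symm

lemma IsKempeSwap.exists_perm_of_isKempeFrozen {φ ψ : G.Coloring (Fin k)}
    (hφ : IsKempeFrozen G φ) (h : IsKempeSwap G φ ψ) :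
    ∃ σ : Equiv.Perm (Fin k), ⇑ψ = σ ∘ φ := by
  obtain ⟨i, j, w, h⟩ := h
  by_cases hw : φ w = i ∨ φ w = j
  · by_cases hij : i = j
    · subst hij
      refine ⟨1, funext fun v => ?_⟩
      by_cases hr : (kempeSubgraph G (fun x => φ x) i i).Reachable w v
      · simpa using (h v).1 hr
      · exact (h v).2 hr
    refine ⟨Equiv.swap i j, funext fun v => ?_⟩
    by_cases hv : φ v = i ∨ φ v = j
    · exact (h v).1 (hφ hij hw hv)
    · by_cases hr : (kempeSubgraph G (fun x => φ x) i j).Reachable w v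
      · exact (h v).1 hr
      · push Not at hv
        rw [(h v).2 hr, Function.comp_apply, Equiv.swap_apply_of_ne_of_ne hv.1 hv.2]
  · -- `w` is isolated in the Kempe subgraph, and the swap does not change its color
    refine ⟨1, funext fun v => ?_⟩
    by_cases hr : (kempeSubgraph G (fun x => φ x) i j).Reachable w v
    · obtain ⟨p⟩ := hr
      cases p with
      | nil =>
        push Not at hw
        rw [(h w).1 .rfl, Equiv.swap_apply_of_ne_of_ne hw.1 hw.2]
        rfl
      | cons hadj _ => exact absurd hadj.2.1 hw
    · exact (h v).2 hr

lemma KempeEquiv.exists_perm_of_isKempeFrozen {φ ψ : G.Coloring (Fin k)}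
    (hφ : IsKempeFrozen G φ) (h : KempeEquiv G k φ ψ) :
    ∃ σ : Equiv.Perm (Fin k), ⇑ψ = σ ∘ φ := by
  have : Std.Symm (IsKempeSwap G (k := k)) := ⟨fun _ _ => IsKempeSwap.symm⟩
  rw [KempeEquiv, Relation.EqvGen.eqvGen_eq_reflTransGen] at h
  induction h with
  | refl => exact ⟨1, rfl⟩
  | tail _ hswap ih =>
    obtain ⟨σ, hσ⟩ := ih
    obtain ⟨τ, hτ⟩ := hswap.exists_perm_of_isKempeFrozen (hσ ▸ hφ.perm_comp σ)
    exact ⟨τ * σ, by rw [hτ, hσ]; rfl⟩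

lemma two_le_Kc_of_not_kempeEquiv [Finite V] {φ ψ : G.Coloring (Fin k)}
    (h : ¬ KempeEquiv G k φ ψ) : 2 ≤ Kc G k := by
  have hequiv : Equivalence (KempeEquiv G k) := Relation.EqvGen.is_equivalence _
  refine Finite.one_lt_card_iff_nontrivial.mpr ⟨Quot.mk _ φ, Quot.mk _ ψ, fun he => h ?_⟩
  exact hequiv.eqvGen_iff.mp (Quot.eqvGen_exact he)

end Kempe

namespace Hhat

instance : DecidableRel Hhat.Adj := fun _ _ => inferInstanceAs (Decidable (_ ∧ _))

def columnColoring : Hhat.Coloring (Fin 4) := Coloring.mk (fun p => p.1.2) fun h => h.2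

def rowColoring : Hhat.Coloring (Fin 3) := Coloring.mk (fun p => p.1.1) fun h => h.1

lemma exists_kempe_center : ∀ a b : Fin 4, a ≠ b → ∃ c : HhatVert, ∀ p : HhatVert,
    (columnColoring p = a ∨ columnColoring p = b) → ∃ m : HhatVert,
      (p = m ∨ (kempeSubgraph Hhat columnColoring a b).Adj p m) ∧
      (m = c ∨ (kempeSubgraph Hhat columnColoring a b).Adj m c) := by
  decide

lemma isKempeFrozen_columnColoring : IsKempeFrozen Hhat columnColoring := by
  intro a b hab p q hp hq
  obtain ⟨c, hc⟩ := exists_kempe_center a b hab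
  have reach_of_eq_or_adj : ∀ {x y}, x = y ∨ (kempeSubgraph Hhat columnColoring a b).Adj x y →
      (kempeSubgraph Hhat columnColoring a b).Reachable x y := by
    rintro x y (rfl | hxy)
    exacts [.rfl, hxy.reachable]
  have reach_center : ∀ p, (columnColoring p = a ∨ columnColoring p = b) →
      (kempeSubgraph Hhat columnColoring a b).Reachable p c := by
    intro p hp
    obtain ⟨m, hpm, hmc⟩ := hc p hp
    exact (reach_of_eq_or_adj hpm).trans (reach_of_eq_or_adj hmc)
  exact (reach_center p hp).trans (reach_center q hq).symm

end Hhat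

namespace Gk

variable {k m n : ℕ}

def inlHom (k : ℕ) : Hhat →g Gk k := ⟨Sum.inl, id⟩

def coloringOfHhat (f : Hhat.Coloring (Fin m)) (h : m + (k - 4) ≤ n) :
    (Gk k).Coloring (Fin n) :=
  Coloring.mk (Sum.elim (fun p => Fin.castLE (by omega) (f p)) fun t => ⟨m + t, by omega⟩) <| by
    rintro (p | t) (q | s) hadj
    · exact fun he => f.valid hadj (Fin.castLE_injective (by omega) he)
    · simp only [Sum.elim_inl, Sum.elim_inr, ne_eq, Fin.ext_iff, Fin.val_castLE]
      omega
    · simp only [Sum.elim_inl, Sum.elim_inr, ne_eq, Fin.ext_iff, Fin.val_castLE]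
      omega
    · simp only [Sum.elim_inr, ne_eq, Fin.ext_iff, Nat.add_left_cancel_iff]
      exact Fin.val_injective.ne hadj

@[simp]
lemma coloringOfHhat_inl_val (f : Hhat.Coloring (Fin m)) (h : m + (k - 4) ≤ n) (p : HhatVert) :
    (coloringOfHhat f h (Sum.inl p) : ℕ) = f p :=
  rfl

@[simp]
lemma coloringOfHhat_inr_val (f : Hhat.Coloring (Fin m)) (h : m + (k - 4) ≤ n)
    (t : Fin (k - 4)) :
    (coloringOfHhat f h (Sum.inr t) : ℕ) = m + t :=
  rfl

lemma isKempeFrozen_coloringOfHhat {f : Hhat.Coloring (Fin m)} (hf : IsKempeFrozen Hhat f)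
    (h : m + (k - 4) = n) : IsKempeFrozen (Gk k) (coloringOfHhat f h.le) := by
  set ψ := coloringOfHhat (k := k) f h.le
  -- a color `j ≥ m` is carried by a single clique vertex, adjacent to all other vertices
  have reach_clique : ∀ {i j : Fin n} (hj : m ≤ j) (u), (ψ u = i ∨ ψ u = j) →
      (kempeSubgraph (Gk k) ψ i j).Reachable u (Sum.inr ⟨j - m, by omega⟩) := by
    intro i j hj u hu
    by_cases hu_eq : u = Sum.inr ⟨j - m, by omega⟩
    · rw [hu_eq]
    refine Adj.reachable ⟨?_, hu, Or.inr (Fin.ext (by simp [ψ]; omega))⟩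
    rcases u with p | t
    · trivial
    · exact fun ht => hu_eq (congrArg Sum.inr ht)
  intro i j hij u v hu hv
  rcases le_or_gt m j with hj | hj
  · exact (reach_clique hj u hu).trans (reach_clique hj v hv).symm
  rcases le_or_gt m i with hi | hi
  · rw [kempeSubgraph_comm]
    exact (reach_clique hi u hu.symm).trans (reach_clique hi v hv.symm).symm
  let a : Fin m := ⟨i, hi⟩
  let b : Fin m := ⟨j, hj⟩
  have hcol : ∀ p, (f p = a ∨ f p = b) ↔ (ψ (Sum.inl p) = i ∨ ψ (Sum.inl p) = j) := by
    simp [ψ, a, b, Fin.ext_iff]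
  have mem_Hhat : ∀ w, (ψ w = i ∨ ψ w = j) → ∃ p, Sum.inl p = w ∧ (f p = a ∨ f p = b) := by
    rintro (p | t) hw
    · exact ⟨p, rfl, (hcol p).2 hw⟩
    · simp only [ψ, Fin.ext_iff, coloringOfHhat_inr_val] at hw
      omega
  obtain ⟨p, rfl, hp⟩ := mem_Hhat u hu
  obtain ⟨q, rfl, hq⟩ := mem_Hhat v hv
  have hab : a ≠ b := by simpa [a, b, Fin.ext_iff] using hij
  exact Reachable.kempeSubgraph_map (inlHom k) (fun p => (hcol p).1) (hf hab hp hq)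

lemma not_kempeEquiv_columnColoring_rowColoring (hk : 4 ≤ k) :
    ¬ KempeEquiv (Gk k) k (coloringOfHhat (k := k) Hhat.columnColoring (by omega))
      (coloringOfHhat (k := k) Hhat.rowColoring (by omega)) := by
  intro hequiv
  obtain ⟨σ, hσ⟩ := hequiv.exists_perm_of_isKempeFrozen
    (isKempeFrozen_coloringOfHhat Hhat.isKempeFrozen_columnColoring (by omega))
  -- `(0,3)` and `(1,3)` share a column but not a row
  have h03 := congrFun hσ (Sum.inl ⟨(0, 3), by decide⟩)
  have h13 := congrFun hσ (Sum.inl ⟨(1, 3), by decide⟩)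
  exact zero_ne_one (congrArg Fin.val (h03.trans h13.symm))

end Gk

/-- For every `k ≥ 4`, the graph `G_k` is `(k-1)`-colorable and has at least two
Kempe equivalence classes of `k`-colorings. -/
theorem stmt14 (k : ℕ) (hk : 4 ≤ k) :
    (Gk k).Colorable (k - 1) ∧ 2 ≤ Kc (Gk k) k :=
  ⟨⟨Gk.coloringOfHhat Hhat.rowColoring (by omega)⟩,
    two_le_Kc_of_not_kempeEquiv (Gk.not_kempeEquiv_columnColoring_rowColoring hk)⟩
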